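/- Let K be a complete discretely valued field (of characteristic 0 or p) with perfect residue field of characteristic p, and let L/K be a finite, totally ramified, Galois extension of degree p^n. Let π_L be a uniformizer of L with minimal polynomial p(x) over K, and set d = v_L(p'(π_L)). If ρ ∈ L satisfies v_L(ρ) ≡ −d − 1 (mod p^n), then Tr_{L/K}(ρ) ≠ 0. -/

import Mathlib

/-!
Let `e = p ^ n` and `f` the minimal polynomial of `π = πL`. Since `L/K` is totally ramified, the
terms `c • π ^ i` (`c ∈ Kˣ`, `i < e`) have valuations `e * v_K(c) + i`, pairwise distinct
mod `e`. Hence `1, π, …, π ^ (e - 1)` is a power basis, and the valuation of a nonzero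
`x = ∑ cᵢ • π ^ i` is `e * v_K(cᵢ) + i` for a single `i` with `cᵢ ≠ 0`.
By Euler's formula the last vector of the trace-dual basis is `1 / f'(π)`, so `Tr(ρ)` is the
coefficient of `π ^ (e - 1)` in `ρ f'(π)`. As `v_L(ρ f'(π)) = v_L(ρ) + d ≡ -1 (mod e)`, this is
precisely the coefficient that realizes the valuation, so it is nonzero.
-/

/-- A normalized discrete valuation on a field `F` : an integer-valued function
(its value at `0` is irrelevant), additive on products of nonzero elements,
satisfying the ultrametric inequality, and attaining the value `1`
(so `v (Fˣ) = ℤ`, i.e. it is normalized). -/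
structure NormDiscVal (F : Type*) [Field F] where
  v : F → ℤ
  v_mul : ∀ x y : F, x ≠ 0 → y ≠ 0 → v (x * y) = v x + v y
  v_add : ∀ x y : F, x ≠ 0 → y ≠ 0 → x + y ≠ 0 → min (v x) (v y) ≤ v (x + y)
  exists_uniformizer : ∃ π : F, π ≠ 0 ∧ v π = 1

namespace NormDiscVal

variable {F : Type*} [Field F]

/-- `x` belongs to the fractional ideal `𝔓^j = {x | v x ≥ j}` (and `0` belongs to all). -/
def memP (w : NormDiscVal F) (j : ℤ) (x : F) : Prop := x = 0 ∨ j ≤ w.v x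

/-- `F` is complete with respect to the valuation `w` :
every Cauchy sequence (for the valuation) has a limit. -/
def IsComplete (w : NormDiscVal F) : Prop :=
  ∀ a : ℕ → F,
    (∀ N : ℤ, ∃ M : ℕ, ∀ m k : ℕ, M ≤ m → M ≤ k → w.memP N (a m - a k)) →
    ∃ l : F, ∀ N : ℤ, ∃ M : ℕ, ∀ m : ℕ, M ≤ m → w.memP N (a m - l)

/-- The residue field of `w` has characteristic `p` and is perfect :
`p` vanishes in the residue field and the Frobenius is surjective on it. -/
def PerfectResidueCharP (w : NormDiscVal F) (p : ℕ) : Prop :=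
  w.memP 1 (p : F) ∧
    ∀ x : F, w.memP 0 x → ∃ y : F, w.memP 0 y ∧ w.memP 1 (x - y ^ p)

end NormDiscVal

open Polynomial

namespace NormDiscVal

variable {F : Type*} [Field F] (w : NormDiscVal F)

theorem v_one : w.v 1 = 0 := by
  have h := w.v_mul 1 1 one_ne_zero one_ne_zero
  rw [one_mul] at h
  omega

theorem v_neg {x : F} (hx : x ≠ 0) : w.v (-x) = w.v x := by
  have h1 := w.v_mul (-1) (-1) (by norm_num) (by norm_num)
  have h2 := w.v_mul (-1) x (by norm_num) hx
  rw [neg_mul_neg, one_mul, w.v_one] at h1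
  rw [neg_one_mul] at h2
  omega

theorem v_pow {x : F} (hx : x ≠ 0) (k : ℕ) : w.v (x ^ k) = k * w.v x := by
  induction k with
  | zero => simpa using w.v_one
  | succ k ih =>
    rw [pow_succ, w.v_mul _ _ (pow_ne_zero _ hx) hx, ih]
    push_cast
    ring

theorem add_ne_zero_of_v_ne {x y : F} (hx : x ≠ 0) (h : w.v x ≠ w.v y) : x + y ≠ 0 := by
  intro hxy
  rw [eq_neg_of_add_eq_zero_right hxy, w.v_neg hx] at h
  exact h rfl

theorem v_add_of_v_ne {x y : F} (hx : x ≠ 0) (hy : y ≠ 0) (h : w.v x ≠ w.v y) :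
    w.v (x + y) = min (w.v x) (w.v y) := by
  have hxy := w.add_ne_zero_of_v_ne hx h
  have hle := w.v_add x y hx hy hxy
  have hx' := w.v_add (x + y) (-y) hxy (neg_ne_zero.2 hy) (by rwa [add_neg_cancel_right])
  have hy' := w.v_add (-x) (x + y) (neg_ne_zero.2 hx) hxy (by rwa [neg_add_cancel_left])
  rw [add_neg_cancel_right, w.v_neg hy] at hx'
  rw [neg_add_cancel_left, w.v_neg hx] at hy'
  omega

theorem sum_ne_zero_and_exists_v_sum_eq {ι : Type*} {s : Finset ι} (hs : s.Nonempty)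
    {f : ι → F} (hf : ∀ i ∈ s, f i ≠ 0) (hinj : Set.InjOn (fun i => w.v (f i)) s) :
    ∑ i ∈ s, f i ≠ 0 ∧ ∃ i ∈ s, w.v (∑ i ∈ s, f i) = w.v (f i) := by
  classical
  induction s using Finset.cons_induction with
  | empty => exact absurd hs Finset.not_nonempty_empty
  | cons a t ha ih =>
    rw [Finset.sum_cons]
    have hfa := hf a (Finset.mem_cons_self a t)
    obtain rfl | ht := t.eq_empty_or_nonempty
    · simpa using hfa
    obtain ⟨hsum, i, hi, hvi⟩ := ih ht (fun i hi => hf i (Finset.mem_cons_of_mem hi))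
      (hinj.mono (by simp))
    have hne : w.v (f a) ≠ w.v (∑ i ∈ t, f i) := by
      rw [hvi]
      intro h
      exact ha (hinj (Finset.mem_cons_self a t) (Finset.mem_cons_of_mem hi) h ▸ hi)
    refine ⟨w.add_ne_zero_of_v_ne hfa hne, ?_⟩
    rw [w.v_add_of_v_ne hfa hsum hne]
    rcases min_choice (w.v (f a)) (w.v (∑ i ∈ t, f i)) with h | h
    · exact ⟨a, Finset.mem_cons_self a t, h⟩
    · exact ⟨i, Finset.mem_cons_of_mem hi, h.trans hvi⟩

def HasRamificationIndex {K L : Type*} [Field K] [Field L] [Algebra K L]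
    (vL : NormDiscVal L) (vK : NormDiscVal K) (e : ℕ) : Prop :=
  ∀ x : K, x ≠ 0 → vL.v (algebraMap K L x) = e * vK.v x

def IsUniformizer (π : F) : Prop := π ≠ 0 ∧ w.v π = 1

section TotallyRamified

variable {K L : Type*} [Field K] [Field L] [Algebra K L] {vK : NormDiscVal K} {vL : NormDiscVal L}
  {e : ℕ} {π : L}

theorem v_smul_pow (hram : vL.HasRamificationIndex vK e) (hπ : vL.IsUniformizer π)
    {c : K} (hc : c ≠ 0) (i : ℕ) : vL.v (c • π ^ i) = e * vK.v c + i := by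
  rw [Algebra.smul_def, vL.v_mul _ _ ((_root_.map_ne_zero _).2 hc) (pow_ne_zero _ hπ.1),
    hram c hc, vL.v_pow hπ.1, hπ.2, mul_one]

theorem sum_smul_pow_ne_zero_and_exists_v_eq (hram : vL.HasRamificationIndex vK e)
    (hπ : vL.IsUniformizer π) {c : Fin e → K} (hc : c ≠ 0) :
    ∑ i, c i • π ^ (i : ℕ) ≠ 0 ∧
      ∃ i, c i ≠ 0 ∧ vL.v (∑ i, c i • π ^ (i : ℕ)) = e * vK.v (c i) + i := by
  classical
  set s := Finset.univ.filter fun i => c i ≠ 0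
  have hsum : ∑ i ∈ s, c i • π ^ (i : ℕ) = ∑ i, c i • π ^ (i : ℕ) :=
    Finset.sum_filter_of_ne fun i _ h hc => h (by rw [hc, zero_smul])
  have hs : s.Nonempty := by
    obtain ⟨i, hi⟩ := Function.ne_iff.1 hc
    exact ⟨i, Finset.mem_filter.2 ⟨Finset.mem_univ i, hi⟩⟩
  have hmem : ∀ i ∈ s, c i ≠ 0 := fun i hi => (Finset.mem_filter.1 hi).2
  have hinj : Set.InjOn (fun i => vL.v (c i • π ^ (i : ℕ))) s := by
    intro i hi j hj hij
    simp only [v_smul_pow hram hπ (hmem i hi), v_smul_pow hram hπ (hmem j hj)] at hij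
    have hmod : ((i : ℕ) : ℤ) % e = ((j : ℕ) : ℤ) % e := by
      simpa using congrArg (· % (e : ℤ)) hij
    rwa [Int.emod_eq_of_lt (Int.natCast_nonneg _) (Int.ofNat_lt.2 i.2),
      Int.emod_eq_of_lt (Int.natCast_nonneg _) (Int.ofNat_lt.2 j.2), Int.ofNat_inj, Fin.val_inj]
      at hmod
  obtain ⟨hne, i, hi, hv⟩ := vL.sum_ne_zero_and_exists_v_sum_eq hs
    (fun i hi => smul_ne_zero (hmem i hi) (pow_ne_zero _ hπ.1)) hinj
  rw [hsum] at hne hv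
  exact ⟨hne, i, hmem i hi, hv.trans (v_smul_pow hram hπ (hmem i hi) _)⟩

theorem linearIndependent_pow_of_isUniformizer (hram : vL.HasRamificationIndex vK e)
    (hπ : vL.IsUniformizer π) : LinearIndependent K fun i : Fin e => π ^ (i : ℕ) := by
  rw [Fintype.linearIndependent_iff]
  intro c hc
  by_contra h
  push Not at h
  exact (sum_smul_pow_ne_zero_and_exists_v_eq hram hπ (Function.ne_iff.2 h)).1 hc

variable [FiniteDimensional K L]

noncomputable def powerBasisOfIsUniformizer (hram : vL.HasRamificationIndex vK e)
    (hπ : vL.IsUniformizer π) (hdeg : Module.finrank K L = e) : PowerBasis K L where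
  gen := π
  dim := e
  basis := basisOfLinearIndependentOfCardEqFinrank' _
    (linearIndependent_pow_of_isUniformizer hram hπ) (by simp [hdeg])
  basis_eq_pow i := congrFun (coe_basisOfLinearIndependentOfCardEqFinrank' _ _ _) i

@[simp]
theorem powerBasisOfIsUniformizer_gen (hram : vL.HasRamificationIndex vK e)
    (hπ : vL.IsUniformizer π) (hdeg : Module.finrank K L = e) :
    (powerBasisOfIsUniformizer hram hπ hdeg).gen = π :=
  rfl

theorem exists_repr_ne_zero_and_v_eq (hram : vL.HasRamificationIndex vK e)
    (hπ : vL.IsUniformizer π) (hdeg : Module.finrank K L = e) {x : L} (hx : x ≠ 0) :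
    let c := (powerBasisOfIsUniformizer hram hπ hdeg).basis.repr x
    ∃ i, c i ≠ 0 ∧ vL.v x = e * vK.v (c i) + i := by
  intro c
  have hsum : ∑ i, c i • π ^ (i : ℕ) = x := by
    simpa only [PowerBasis.coe_basis, powerBasisOfIsUniformizer_gen] using
      (powerBasisOfIsUniformizer hram hπ hdeg).basis.sum_repr x
  have hc : (c : Fin e → K) ≠ 0 := by
    intro h
    apply hx
    simp [← hsum, h]
  obtain ⟨i, hci, hvi⟩ := (sum_smul_pow_ne_zero_and_exists_v_eq hram hπ hc).2
  exact ⟨i, hci, hsum ▸ hvi⟩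

end TotallyRamified

end NormDiscVal

theorem PowerBasis.trace_eq_repr_mul_aeval_derivative {K L : Type*} [Field K] [Field L]
    [Algebra K L] [FiniteDimensional K L] [Algebra.IsSeparable K L] (pb : PowerBasis K L) (x : L) :
    Algebra.trace K L x =
      pb.basis.repr (x * aeval pb.gen (derivative (minpoly K pb.gen)))
        ⟨pb.dim - 1, Nat.sub_one_lt_of_lt pb.dim_pos⟩ := by
  set D := aeval pb.gen (derivative (minpoly K pb.gen))
  set last : Fin pb.dim := ⟨pb.dim - 1, Nat.sub_one_lt_of_lt pb.dim_pos⟩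
  have hD : D ≠ 0 := (Algebra.IsSeparable.isSeparable K pb.gen).aeval_derivative_ne_zero
    (minpoly.aeval K pb.gen)
  have hdual : pb.basis.traceDual last = D⁻¹ := by
    rw [Module.Basis.traceDual_powerBasis_eq]
    change (minpolyDiv K pb.gen).coeff (pb.dim - 1) / D = D⁻¹
    rw [← pb.natDegree_minpoly, ← natDegree_minpolyDiv,
      (minpolyDiv_monic pb.isIntegral_gen).coeff_natDegree, one_div]
  have hx : x = (∑ i, pb.basis.repr (x * D) i • pb.basis i) * D⁻¹ := by
    rw [pb.basis.sum_repr, mul_inv_cancel_right₀ hD x]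
  conv_lhs => rw [hx, Finset.sum_mul, map_sum, ← hdual]
  simp only [smul_mul_assoc, map_smul, Module.Basis.trace_mul_traceDual, smul_eq_mul, mul_ite,
    mul_one, mul_zero, Finset.sum_ite_eq', Finset.mem_univ, if_true]

theorem trace_ne_zero_of_critical_valuation_general
    {p : ℕ} {K L : Type*} [Field K] [Field L] [Algebra K L]
    (vK : NormDiscVal K)
    [FiniteDimensional K L] [IsGalois K L]
    (n : ℕ) (hdeg : Module.finrank K L = p ^ n)
    (vL : NormDiscVal L)
    (htotram : ∀ x : K, x ≠ 0 → vL.v (algebraMap K L x) = (p ^ n : ℤ) * vK.v x)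
    (πL : L) (hπL : πL ≠ 0 ∧ vL.v πL = 1)
    (d : ℤ) (hd : d = vL.v (aeval πL (derivative (minpoly K πL))))
    (ρ : L) (hρ : ρ ≠ 0)
    (hval : Int.ModEq ((p : ℤ) ^ n) (vL.v ρ) (-d - 1)) :
    Algebra.trace K L ρ ≠ 0 := by
  have hram : vL.HasRamificationIndex vK (p ^ n) := by
    intro x hx
    push_cast
    exact htotram x hx
  set D := aeval πL (derivative (minpoly K πL))
  have hD : D ≠ 0 :=
    (Algebra.IsSeparable.isSeparable K πL).aeval_derivative_ne_zero (minpoly.aeval K πL)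
  set pb := NormDiscVal.powerBasisOfIsUniformizer hram hπL hdeg
  rw [pb.trace_eq_repr_mul_aeval_derivative]
  obtain ⟨i, hci, hvi⟩ :=
    NormDiscVal.exists_repr_ne_zero_and_v_eq hram hπL hdeg (mul_ne_zero hρ hD)
  rw [vL.v_mul _ _ hρ hD, ← hd] at hvi
  have hdvd : ((p ^ n : ℕ) : ℤ) ∣ i + 1 := by
    have hi : (i : ℤ) + 1 =
        -((-d - 1) - vL.v ρ) - (p ^ n : ℕ) * vK.v (pb.basis.repr (ρ * D) i) := by
      linear_combination -hvi
    rw [hi]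
    exact dvd_sub (dvd_neg.2 (by exact_mod_cast hval.dvd)) (dvd_mul_right _ _)
  have hlast : i = ⟨p ^ n - 1, Nat.sub_one_lt_of_lt pb.dim_pos⟩ := by
    have hle := Int.le_of_dvd (by positivity) hdvd
    have hlt : (i : ℕ) < p ^ n := i.2
    exact Fin.ext (by change (i : ℕ) = p ^ n - 1; omega)
  rwa [hlast] at hci

/-- **Nonvanishing of the trace at the critical valuation.**  Let `K` be a
complete discretely valued field (characteristic `0` or `p`) with perfect
residue field of characteristic `p`, and `L/K` a finite, totally ramified,
Galois extension of degree `p ^ n`.  With `d = v_L(p'(πL))`, every `ρ ∈ L`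
with `v_L(ρ) ≡ −d − 1 (mod p ^ n)` has `Tr_{L/K}(ρ) ≠ 0`. -/
theorem trace_ne_zero_of_critical_valuation
    {p : ℕ} (hp : p.Prime) {K L : Type*} [Field K] [Field L] [Algebra K L]
    (hchar : ringChar K = 0 ∨ ringChar K = p)
    (vK : NormDiscVal K) (hKcompl : vK.IsComplete)
    (hKres : vK.PerfectResidueCharP p)
    [FiniteDimensional K L] [IsGalois K L]
    (n : ℕ) (hdeg : Module.finrank K L = p ^ n)
    (vL : NormDiscVal L)
    (htotram : ∀ x : K, x ≠ 0 → vL.v (algebraMap K L x) = (p ^ n : ℤ) * vK.v x)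
    (πL : L) (hπL : πL ≠ 0 ∧ vL.v πL = 1)
    (d : ℤ) (hd : d = vL.v (aeval πL (derivative (minpoly K πL))))
    (ρ : L) (hρ : ρ ≠ 0)
    (hval : Int.ModEq ((p : ℤ) ^ n) (vL.v ρ) (-d - 1)) :
    Algebra.trace K L ρ ≠ 0 :=
  trace_ne_zero_of_critical_valuation_general vK n hdeg vL htotram πL hπL d hd ρ hρ hval
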